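/- Let w₁, w₂ > 0 and let q = (q₁, q₂) : ℝ → ℝ² be a smooth solution of the planar Pais–Uhlenbeck system q⁽⁴⁾ + (w₁² + w₂²) q̈ + w₁²w₂² q = 0. Then the angular-momentum-like quantity K₃(t) = (w₁² + w₂²) det(q̇(t), q(t)) + det(q̇(t), q̈(t)) + det(q⁽³⁾(t), q(t)) is constant in t. -/

import Mathlib

/-!
Differentiating `K₃` and using `det(a, a) = 0` and `det(a, b) = -det(b, a)`, every term cancels
except `det(q⁽⁴⁾ + (w₁² + w₂²) q̈, q)`, which by the equation of motion is
`-w₁²w₂² det(q, q) = 0`.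
-/

local notation "ℝ²" => EuclideanSpace ℝ (Fin 2)

def planarDet (a b : ℝ²) : ℝ := a 0 * b 1 - a 1 * b 0

theorem HasDerivAt.planarDet {f g : ℝ → ℝ²} {f' g' : ℝ²} {t : ℝ}
    (hf : HasDerivAt f f' t) (hg : HasDerivAt g g' t) :
    HasDerivAt (fun s => planarDet (f s) (g s)) (planarDet f' (g t) + planarDet (f t) g') t := by
  have hc : ∀ {h : ℝ → ℝ²} {h' : ℝ²} (i : Fin 2), HasDerivAt h h' t →
      HasDerivAt (fun s => h s i) (h' i) t :=
    fun i hh => (EuclideanSpace.proj (𝕜 := ℝ) i).hasFDerivAt.comp_hasDerivAt t hh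
  exact (((hc 0 hf).mul (hc 1 hg)).sub ((hc 1 hf).mul (hc 0 hg))).congr_deriv
    (by simp only [_root_.planarDet]; ring)

theorem hasDerivAt_iteratedDeriv {F : Type*} [NormedAddCommGroup F] [NormedSpace ℝ F]
    {f : ℝ → F} {n : WithTop ℕ∞} (hf : ContDiff ℝ n f) {m : ℕ}
    (hm : (m : WithTop ℕ∞) < n)
    (t : ℝ) : HasDerivAt (iteratedDeriv m f) (iteratedDeriv (m + 1) f t) t := by
  rw [iteratedDeriv_succ]
  exact (hf.differentiable_iteratedDeriv m hm t).hasDerivAt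

theorem planarDet_derivative_cancel {A B : ℝ} {q₀ q₁ q₂ q₃ q₄ : ℝ²}
    (h : q₄ + A • q₂ + B • q₀ = 0) :
    A * (planarDet q₂ q₀ + planarDet q₁ q₁) + (planarDet q₂ q₂ + planarDet q₁ q₃)
      + (planarDet q₄ q₀ + planarDet q₃ q₁) = 0 := by
  obtain rfl : q₄ = -(A • q₂ + B • q₀) :=
    eq_neg_of_add_eq_zero_left (by rw [← add_assoc, h])
  simp only [planarDet, PiLp.neg_apply, PiLp.add_apply, PiLp.smul_apply, smul_eq_mul]
  ring

noncomputable def angularK (A : ℝ) (q : ℝ → ℝ²) (t : ℝ) : ℝ :=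
  A * planarDet (deriv q t) (q t) + planarDet (deriv q t) (iteratedDeriv 2 q t)
    + planarDet (iteratedDeriv 3 q t) (q t)

theorem hasDerivAt_angularK {A B : ℝ} {q : ℝ → ℝ²} (hq : ContDiff ℝ 4 q) {t : ℝ}
    (hEL : iteratedDeriv 4 q t + A • iteratedDeriv 2 q t + B • q t = 0) :
    HasDerivAt (angularK A q) 0 t := by
  have hd : ∀ m : ℕ, m < 4 → HasDerivAt (iteratedDeriv m q) (iteratedDeriv (m + 1) q t) t :=
    fun m hm => hasDerivAt_iteratedDeriv hq (by exact_mod_cast hm) t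
  have h₀ := hd 0 (by norm_num)
  have h₁ := hd 1 (by norm_num)
  simp only [iteratedDeriv_zero, iteratedDeriv_one] at h₀ h₁
  have hK := (((h₁.planarDet h₀).const_mul A).add (h₁.planarDet (hd 2 (by norm_num)))).add
    ((hd 3 (by norm_num)).planarDet h₀)
  simp only [Nat.reduceAdd, iteratedDeriv_one] at hK
  rwa [planarDet_derivative_cancel hEL] at hK

theorem angularK_eq_angularK_zero {A B : ℝ} {q : ℝ → ℝ²} (hq : ContDiff ℝ 4 q)
    (hEL : ∀ t, iteratedDeriv 4 q t + A • iteratedDeriv 2 q t + B • q t = 0) (t : ℝ) :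
    angularK A q t = angularK A q 0 :=
  is_const_of_deriv_eq_zero (fun s => (hasDerivAt_angularK hq (hEL s)).differentiableAt)
    (fun s => (hasDerivAt_angularK hq (hEL s)).deriv) t 0

theorem stmt_14_general
    (w₁ w₂ : ℝ)
    (q : ℝ → EuclideanSpace ℝ (Fin 2)) (hq : ContDiff ℝ (⊤ : ℕ∞) q)
    (hEL : ∀ t : ℝ,
      iteratedDeriv 4 q t + (w₁ ^ 2 + w₂ ^ 2) • iteratedDeriv 2 q t
        + (w₁ ^ 2 * w₂ ^ 2) • q t = 0) :
    ∃ c : ℝ, ∀ t : ℝ,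
      (w₁ ^ 2 + w₂ ^ 2) * (deriv q t 0 * q t 1 - deriv q t 1 * q t 0)
        + (deriv q t 0 * iteratedDeriv 2 q t 1 - deriv q t 1 * iteratedDeriv 2 q t 0)
        + (iteratedDeriv 3 q t 0 * q t 1 - iteratedDeriv 3 q t 1 * q t 0) = c :=
  ⟨_, angularK_eq_angularK_zero (hq.of_le (WithTop.coe_le_coe.mpr le_top)) hEL⟩

/-- Angular-momentum-like first integral of the planar Pais–Uhlenbeck system:
`K₃ = (w₁²+w₂²) det(q̇, q) + det(q̇, q̈) + det(q⁽³⁾, q)` is constant, where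
`det(a,b) = a₁b₂ − a₂b₁`. -/
theorem stmt_14
    (w₁ w₂ : ℝ) (hw₁ : 0 < w₁) (hw₂ : 0 < w₂)
    (q : ℝ → EuclideanSpace ℝ (Fin 2)) (hq : ContDiff ℝ (⊤ : ℕ∞) q)
    (hEL : ∀ t : ℝ,
      iteratedDeriv 4 q t + (w₁ ^ 2 + w₂ ^ 2) • iteratedDeriv 2 q t
        + (w₁ ^ 2 * w₂ ^ 2) • q t = 0) :
    ∃ c : ℝ, ∀ t : ℝ,
      (w₁ ^ 2 + w₂ ^ 2) * (deriv q t 0 * q t 1 - deriv q t 1 * q t 0)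
        + (deriv q t 0 * iteratedDeriv 2 q t 1 - deriv q t 1 * iteratedDeriv 2 q t 0)
        + (iteratedDeriv 3 q t 0 * q t 1 - iteratedDeriv 3 q t 1 * q t 0) = c :=
  stmt_14_general w₁ w₂ q hq hEL
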